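/- For every probability measure μ on E_Δ and every t ≥ 0, M^μ_{t+} := ∩_{s>t} M^μ_s equals G^{μ,2}_t := {Λ ⊂ Ω : there exist Λ' ∈ F^0_{t+} and Γ ∈ F^0_{t+} with Λ △ Λ' ⊂ Γ and P^h_μ(Γ; t<ζ) = 0}. -/

import Mathlib

/-!
On `{T < ζ}` the point `X_T` is not the cemetery, so for `x ≠ Δ` the density `e^{αT} h(x) / h(X_T)`
of `Q̄_{x,T}` with respect to `P^h_x` is strictly positive and finite there, while `P^h_Δ(T < ζ) = 0`.
Hence `Q̄_{μ,T}(Γ) = 0` iff `P^h_μ(Γ; T < ζ) = 0`, and since `{t < ζ} = ⋃_{T > t} {T < ζ}`, a set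
`Γ` is `Q̄_{μ,T}`-null for all `T > t` iff `P^h_μ(Γ; t < ζ) = 0`. This gives `G^{μ,2}_t ⊆ M^μ_s`
for `s > t` at once. Conversely, for `Λ ∈ M^μ_{t+}` take witnesses `(Λ_n, Γ_n)` at times
`u_n ↓ t`; their `limsup`s are tail events, hence `F⁰_{t+}`-measurable, `limsup Γ_n` still covers
`Λ △ limsup Λ_n`, and for each `T > t` it is covered by the `Γ_n` with `u_n < T`, which are
`Q̄_{μ,T}`-null.
-/

open MeasureTheory Set Filter
open scoped NNReal ENNReal

noncomputable section

variable {S : Type*} [MeasurableSpace S] {Ω : Type*}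

/-- The natural filtration `F⁰_t = σ(X_s : s ∈ [0,t])` of the process `X`. -/
def F0 (X : ℝ≥0 → Ω → S) (t : ℝ≥0) : MeasurableSpace Ω :=
  ⨆ s ∈ Set.Iic t, MeasurableSpace.comap (X s) inferInstance

/-- `F⁰_∞ = σ(X_s : s ≥ 0)`. -/
def F0inf (X : ℝ≥0 → Ω → S) : MeasurableSpace Ω :=
  ⨆ s : ℝ≥0, MeasurableSpace.comap (X s) inferInstance

/-- `F⁰_{t+} = ⋂_{s > t} F⁰_s`. -/
def F0plus (X : ℝ≥0 → Ω → S) (t : ℝ≥0) : MeasurableSpace Ω :=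
  ⨅ s ∈ Set.Ioi t, F0 X s

/-- The life time `ζ(ω) = inf {t ≥ 0 : X_t(ω) = Δ}` (with value `∞` if the path
never reaches the cemetery `Δ`). -/
def lifetime (Δ : S) (X : ℝ≥0 → Ω → S) (ω : Ω) : ℝ≥0∞ :=
  ⨅ (t : ℝ≥0) (_ : X t ω = Δ), (t : ℝ≥0∞)

variable (Δ : S)

/-- `Q̄_{x,t}[f ; t < ζ] := h(x)·E^h_x[e^{αt}·f/h(X_t) ; t < ζ]`, the σ-finite
distribution up to time `t` applied to a nonnegative integrand `f`. -/
def Qbar (α : ℝ) (h : S → ℝ≥0∞) (X : ℝ≥0 → Ω → S)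
    (P : S → @Measure Ω (F0inf X)) (x : S) (t : ℝ≥0) (f : Ω → ℝ≥0∞) : ℝ≥0∞ :=
  h x * ∫⁻ ω in {ω | (t : ℝ≥0∞) < lifetime Δ X ω},
      ENNReal.ofReal (Real.exp (α * (t : ℝ))) * f ω * (h (X t ω))⁻¹ ∂(P x)

/-- `Q̄_{x,t}(Λ ; t < ζ)` of a set `Λ`. -/
def QbarSet (α : ℝ) (h : S → ℝ≥0∞) (X : ℝ≥0 → Ω → S)
    (P : S → @Measure Ω (F0inf X)) (x : S) (t : ℝ≥0) (Λ : Set Ω) : ℝ≥0∞ :=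
  Qbar Δ α h X P x t (Λ.indicator 1)

/-- `Q̄_{μ,t}(Λ ; t < ζ) = ∫ Q̄_{x,t}(Λ ; t < ζ) μ(dx)` (note `Q̄_{Δ,t} = 0`
automatically since `h Δ = 0`). -/
def Qmu (α : ℝ) (h : S → ℝ≥0∞) (X : ℝ≥0 → Ω → S)
    (P : S → @Measure Ω (F0inf X)) (μ : Measure S) (t : ℝ≥0) (Λ : Set Ω) : ℝ≥0∞ :=
  ∫⁻ x, QbarSet Δ α h X P x t Λ ∂μ

/-- `P^h_μ(Λ) = ∫ P^h_x(Λ) μ(dx)`. -/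
def Pmu (X : ℝ≥0 → Ω → S) (P : S → @Measure Ω (F0inf X)) (μ : Measure S)
    (Λ : Set Ω) : ℝ≥0∞ :=
  ∫⁻ x, P x Λ ∂μ

/-- `P^h_μ(Λ ; t < ζ)`. -/
def PmuT (X : ℝ≥0 → Ω → S) (P : S → @Measure Ω (F0inf X)) (μ : Measure S)
    (t : ℝ≥0) (Λ : Set Ω) : ℝ≥0∞ :=
  ∫⁻ x, P x (Λ ∩ {ω | (t : ℝ≥0∞) < lifetime Δ X ω}) ∂μ

/-- The augmented σ-field `M^μ_t`. -/
def Mmu (α : ℝ) (h : S → ℝ≥0∞) (X : ℝ≥0 → Ω → S)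
    (P : S → @Measure Ω (F0inf X)) (μ : Measure S) (t : ℝ≥0) : Set (Set Ω) :=
  {Λ | ∃ Λ' Γ : Set Ω, MeasurableSet[F0 X t] Λ' ∧ MeasurableSet[F0plus X t] Γ ∧
      symmDiff Λ Λ' ⊆ Γ ∧ ∀ T : ℝ≥0, t < T → Qmu Δ α h X P μ T Γ = 0}

/-- The auxiliary family `G^{μ,1}_t`. -/
def Gmu1 (α : ℝ) (h : S → ℝ≥0∞) (X : ℝ≥0 → Ω → S)
    (P : S → @Measure Ω (F0inf X)) (μ : Measure S) (t : ℝ≥0) : Set (Set Ω) :=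
  {Λ | ∃ Λ' Γ : Set Ω, MeasurableSet[F0 X t] Λ' ∧ MeasurableSet[F0plus X t] Γ ∧
      symmDiff Λ Λ' ⊆ Γ ∧ PmuT Δ X P μ t Γ = 0}

/-- The auxiliary family `G^{μ,2}_t`. -/
def Gmu2 (α : ℝ) (h : S → ℝ≥0∞) (X : ℝ≥0 → Ω → S)
    (P : S → @Measure Ω (F0inf X)) (μ : Measure S) (t : ℝ≥0) : Set (Set Ω) :=
  {Λ | ∃ Λ' Γ : Set Ω, MeasurableSet[F0plus X t] Λ' ∧ MeasurableSet[F0plus X t] Γ ∧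
      symmDiff Λ Λ' ⊆ Γ ∧ PmuT Δ X P μ t Γ = 0}

/-- The `P^h_μ`-augmentation `F^{h,μ}_t` of `F⁰_t` in `F⁰_∞`. -/
def Fhmu (X : ℝ≥0 → Ω → S) (P : S → @Measure Ω (F0inf X)) (μ : Measure S)
    (t : ℝ≥0) : Set (Set Ω) :=
  {Λ | ∃ Λ' Γ : Set Ω, MeasurableSet[F0 X t] Λ' ∧ MeasurableSet[F0inf X] Γ ∧
      symmDiff Λ Λ' ⊆ Γ ∧ Pmu X P μ Γ = 0}

/-- `M_t = ⋂_μ M^μ_t`, the intersection over all probability measures `μ` on `E_Δ`. -/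
def Mt (α : ℝ) (h : S → ℝ≥0∞) (X : ℝ≥0 → Ω → S)
    (P : S → @Measure Ω (F0inf X)) (t : ℝ≥0) : Set (Set Ω) :=
  {Λ | ∀ μ : Measure S, IsProbabilityMeasure μ → Λ ∈ Mmu Δ α h X P μ t}

/-- `M_∞ = σ(⋃_t M_t)`. -/
def Minf (α : ℝ) (h : S → ℝ≥0∞) (X : ℝ≥0 → Ω → S)
    (P : S → @Measure Ω (F0inf X)) : MeasurableSpace Ω :=
  MeasurableSpace.generateFrom {Λ | ∃ t : ℝ≥0, Λ ∈ Mt Δ α h X P t}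

/-- `M^μ_∞ = σ(⋃_t M^μ_t)`. -/
def Mmuinf (α : ℝ) (h : S → ℝ≥0∞) (X : ℝ≥0 → Ω → S)
    (P : S → @Measure Ω (F0inf X)) (μ : Measure S) : MeasurableSpace Ω :=
  MeasurableSpace.generateFrom {Λ | ∃ t : ℝ≥0, Λ ∈ Mmu Δ α h X P μ t}

/-- `M_σ` for an `(M_t)`-stopping time `σ`. -/
def Msigma (α : ℝ) (h : S → ℝ≥0∞) (X : ℝ≥0 → Ω → S)
    (P : S → @Measure Ω (F0inf X)) (σ : Ω → ℝ≥0∞) : Set (Set Ω) :=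
  {Λ | MeasurableSet[Minf Δ α h X P] Λ ∧
      ∀ t : ℝ≥0, Λ ∩ {ω | σ ω ≤ (t : ℝ≥0∞)} ∈ Mt Δ α h X P t}

/-- `M^μ_σ` for an `(M^μ_t)`-stopping time `σ`. -/
def Mmusigma (α : ℝ) (h : S → ℝ≥0∞) (X : ℝ≥0 → Ω → S)
    (P : S → @Measure Ω (F0inf X)) (μ : Measure S) (σ : Ω → ℝ≥0∞) : Set (Set Ω) :=
  {Λ | MeasurableSet[Mmuinf Δ α h X P μ] Λ ∧
      ∀ t : ℝ≥0, Λ ∩ {ω | σ ω ≤ (t : ℝ≥0∞)} ∈ Mmu Δ α h X P μ t}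

/-- `F^{h,μ}_T` for an `(F^{h,μ}_t)`-stopping time `T`. -/
def FhmuStop (X : ℝ≥0 → Ω → S) (P : S → @Measure Ω (F0inf X)) (μ : Measure S)
    (T : Ω → ℝ≥0∞) : Set (Set Ω) :=
  {Λ | ∀ t : ℝ≥0, Λ ∩ {ω | T ω ≤ (t : ℝ≥0∞)} ∈ Fhmu X P μ t}

/-- `X_σ`, with the convention `X_∞ = Δ`. -/
def Xstop (X : ℝ≥0 → Ω → S) (σ : Ω → ℝ≥0∞) (ω : Ω) : S :=
  if σ ω < ∞ then X (σ ω).toNNReal ω else Δ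

/-- The shift `θ_σ` at a random time `σ`. -/
def thetaStop (θ : ℝ≥0 → Ω → Ω) (σ : Ω → ℝ≥0∞) (ω : Ω) : Ω :=
  θ (σ ω).toNNReal ω

/-- `Q̄_{x,σ}[f ; σ < ζ] := h(x)·E^h_x[e^{ασ}·f/h(X_σ) ; σ < ζ]`, the σ-finite
distribution up to a stopping time `σ` applied to a nonnegative integrand `f`. -/
def QbarStop (α : ℝ) (h : S → ℝ≥0∞) (X : ℝ≥0 → Ω → S)
    (P : S → @Measure Ω (F0inf X)) (x : S) (σ : Ω → ℝ≥0∞) (f : Ω → ℝ≥0∞) : ℝ≥0∞ :=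
  h x * ∫⁻ ω in {ω | σ ω < lifetime Δ X ω},
      ENNReal.ofReal (Real.exp (α * (σ ω).toReal)) * f ω * (h (Xstop Δ X σ ω))⁻¹ ∂(P x)

/-- `Q̄_{x,σ}(Λ ; σ < ζ)` of a set `Λ`. -/
def QbarStopSet (α : ℝ) (h : S → ℝ≥0∞) (X : ℝ≥0 → Ω → S)
    (P : S → @Measure Ω (F0inf X)) (x : S) (σ : Ω → ℝ≥0∞) (Λ : Set Ω) : ℝ≥0∞ :=
  QbarStop Δ α h X P x σ (Λ.indicator 1)

/-- The entrance time `D_B = inf {t ≥ 0 : X_t ∈ B}`. -/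
def entranceTime (B : Set S) (X : ℝ≥0 → Ω → S) (ω : Ω) : ℝ≥0∞ :=
  ⨅ (t : ℝ≥0) (_ : X t ω ∈ B), (t : ℝ≥0∞)

/-- The hitting time `σ_B = inf {t > 0 : X_t ∈ B}`. -/
def hittingTime (B : Set S) (X : ℝ≥0 → Ω → S) (ω : Ω) : ℝ≥0∞ :=
  ⨅ (t : ℝ≥0) (_ : 0 < t ∧ X t ω ∈ B), (t : ℝ≥0∞)

/-- A set is universally measurable (`∈ B(E_Δ)*`) if it lies in the completion of
`B(E_Δ)` with respect to every probability measure. -/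
def UniversallyMeasurableSet (A : Set S) : Prop :=
  ∀ ν : Measure S, IsProbabilityMeasure ν → NullMeasurableSet A ν

/-- Iterated kernel integral
`∫ κ_{t₁-t₀}(x,dx₁) ∫ κ_{t₂-t₁}(x₁,dx₂) ⋯ f(x₁,…,xₙ)`, where `t₀` is the
starting time. -/
def iterK (κ : ℝ≥0 → S → Measure S) :
    (n : ℕ) → (Fin (n + 1) → ℝ≥0) → ℝ≥0 → S → ((Fin (n + 1) → S) → ℝ≥0∞) → ℝ≥0∞
  | 0, t, t0, x, f => ∫⁻ y, f (fun _ => y) ∂(κ (t 0 - t0) x)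
  | n + 1, t, t0, x, f =>
      ∫⁻ y, iterK κ n (fun i => t i.succ) (t 0) y (fun v => f (Fin.cons y v))
        ∂(κ (t 0 - t0) x)


/-- `γ = (σ + τ∘θ_σ)_ζ`, the time `σ + τ∘θ_σ` truncated to `∞` off `{σ + τ∘θ_σ < ζ}`. -/
def gammaTime (Δ : S) (X : ℝ≥0 → Ω → S) (θ : ℝ≥0 → Ω → Ω) (σ τ : Ω → ℝ≥0∞)
    (ω : Ω) : ℝ≥0∞ :=
  if σ ω + τ (thetaStop θ σ ω) < lifetime Δ X ω then σ ω + τ (thetaStop θ σ ω)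
  else ∞

end

open Topology

section Filtration

variable {S : Type*} [MeasurableSpace S] {Ω : Type*} (X : ℝ≥0 → Ω → S)

theorem measurable_F0inf (s : ℝ≥0) : Measurable[F0inf X] (X s) :=
  fun _ hA => le_iSup (fun u => MeasurableSpace.comap (X u) inferInstance) s _ ⟨_, hA, rfl⟩

theorem F0_le_F0inf (s : ℝ≥0) : F0 X s ≤ F0inf X :=
  iSup₂_le fun u _ => le_iSup (fun u => MeasurableSpace.comap (X u) inferInstance) u

theorem F0_mono {s u : ℝ≥0} (h : s ≤ u) : F0 X s ≤ F0 X u :=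
  iSup₂_le fun v hv =>
    le_iSup₂ (f := fun (v : ℝ≥0) (_ : v ∈ Iic u) => MeasurableSpace.comap (X v) inferInstance)
      v (le_trans hv h)

theorem F0plus_le_F0 {t s : ℝ≥0} (h : t < s) : F0plus X t ≤ F0 X s :=
  iInf₂_le s h

theorem F0plus_mono {t u : ℝ≥0} (h : t ≤ u) : F0plus X t ≤ F0plus X u :=
  le_iInf₂ fun v hv => iInf₂_le v (h.trans_lt hv)

theorem F0plus_le_F0inf (t : ℝ≥0) : F0plus X t ≤ F0inf X :=
  (F0plus_le_F0 X (lt_add_one t)).trans (F0_le_F0inf X _)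

theorem measurableSet_F0plus_iff {t : ℝ≥0} {A : Set Ω} :
    MeasurableSet[F0plus X t] A ↔ ∀ u, t < u → MeasurableSet[F0 X u] A := by
  rw [F0plus, iInf_subtype', MeasurableSpace.measurableSet_iInf, Subtype.forall]
  rfl

end Filtration

section Limsup

variable {α : Type*}

theorem measurableSet_limsup_of_eventually {m : MeasurableSpace α} {s : ℕ → Set α}
    (hs : ∀ᶠ n in atTop, MeasurableSet[m] (s n)) : MeasurableSet[m] (limsup s atTop) := by
  obtain ⟨N, hN⟩ := eventually_atTop.1 hs
  rw [← limsup_nat_add s N]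
  exact MeasurableSet.measurableSet_limsup fun n => hN _ (Nat.le_add_left N n)

theorem symmDiff_limsup_subset_limsup {ι : Type*} {f : Filter ι} [f.NeBot] {a : Set α}
    {L G : ι → Set α} (h : ∀ i, symmDiff a (L i) ⊆ G i) :
    symmDiff a (limsup L f) ⊆ limsup G f := by
  intro ω hω
  rw [mem_limsup_iff_frequently_mem]
  rcases hω with ⟨ha, hL⟩ | ⟨hL, ha⟩
  · rw [mem_limsup_iff_frequently_mem, not_frequently] at hL
    exact (hL.mono fun i hi => h i (Or.inl ⟨ha, hi⟩)).frequently
  · rw [mem_limsup_iff_frequently_mem] at hL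
    exact hL.mono fun i hi => h i (Or.inr ⟨hi, ha⟩)

theorem measure_limsup_eq_zero_of_eventually {m : MeasurableSpace α} {ν : @Measure α m}
    {s : ℕ → Set α} (hs : ∀ᶠ n in atTop, ν (s n) = 0) : ν (limsup s atTop) = 0 := by
  obtain ⟨N, hN⟩ := eventually_atTop.1 hs
  rw [← limsup_nat_add s N]
  exact measure_mono_null limsup_le_iSup
    (measure_iUnion_null fun n => hN _ (Nat.le_add_left N n))

end Limsup

theorem ENNReal.exists_coe_lt_of_tendsto {u : ℕ → ℝ≥0} {t : ℝ≥0} (hu : Tendsto u atTop (𝓝 t))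
    {z : ℝ≥0∞} (hz : (t : ℝ≥0∞) < z) : ∃ n, (u n : ℝ≥0∞) < z :=
  ((ENNReal.tendsto_coe.2 hu).eventually (gt_mem_nhds hz)).exists

theorem ENNReal.iUnion_setOf_coe_lt {Ω : Type*} {f : Ω → ℝ≥0∞} {t : ℝ≥0} {u : ℕ → ℝ≥0}
    (hu : Tendsto u atTop (𝓝 t)) (htu : ∀ n, t < u n) :
    ⋃ n, {ω | (u n : ℝ≥0∞) < f ω} = {ω | (t : ℝ≥0∞) < f ω} := by
  ext ω
  simp only [mem_iUnion, mem_ofPred_eq]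
  exact ⟨fun ⟨n, hn⟩ => (ENNReal.coe_lt_coe.2 (htu n)).trans hn,
    ENNReal.exists_coe_lt_of_tendsto hu⟩

section Lifetime

variable {S : Type*} {Ω : Type*} {Δ : S} {X : ℝ≥0 → Ω → S}

theorem lifetime_le_of_eq {ω : Ω} {u : ℝ≥0} (hu : X u ω = Δ) : lifetime Δ X ω ≤ u :=
  iInf₂_le u hu

theorem ne_of_lt_lifetime {ω : Ω} {u : ℝ≥0} (hu : (u : ℝ≥0∞) < lifetime Δ X ω) : X u ω ≠ Δ :=
  fun h => (lifetime_le_of_eq h).not_gt hu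

theorem le_lifetime_of_ne (hX_absorb : ∀ (ω : Ω) (s t : ℝ≥0), s ≤ t → X s ω = Δ → X t ω = Δ)
    {ω : Ω} {u : ℝ≥0} (hu : X u ω ≠ Δ) : (u : ℝ≥0∞) ≤ lifetime Δ X ω :=
  le_iInf₂ fun s hs => ENNReal.coe_le_coe.2 <|
    not_lt.1 fun hsu => hu (hX_absorb ω s u hsu.le hs)

theorem lt_lifetime_iff_exists_ne
    (hX_absorb : ∀ (ω : Ω) (s t : ℝ≥0), s ≤ t → X s ω = Δ → X t ω = Δ)
    {T : ℝ≥0} {u : ℕ → ℝ≥0} (hu : Tendsto u atTop (𝓝 T)) (hTu : ∀ n, T < u n) (ω : Ω) :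
    (T : ℝ≥0∞) < lifetime Δ X ω ↔ ∃ n, X (u n) ω ≠ Δ := by
  refine ⟨fun hT => ?_, fun ⟨n, hn⟩ => ?_⟩
  · obtain ⟨n, hn⟩ := ENNReal.exists_coe_lt_of_tendsto hu hT
    exact ⟨n, ne_of_lt_lifetime hn⟩
  · exact (ENNReal.coe_lt_coe.2 (hTu n)).trans_le (le_lifetime_of_ne hX_absorb hn)

theorem measurableSet_lt_lifetime [MeasurableSpace S] [MeasurableSingletonClass S]
    (hX_absorb : ∀ (ω : Ω) (s t : ℝ≥0), s ≤ t → X s ω = Δ → X t ω = Δ) (T : ℝ≥0) :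
    MeasurableSet[F0inf X] {ω | (T : ℝ≥0∞) < lifetime Δ X ω} := by
  obtain ⟨u, -, hTu, hu⟩ := exists_seq_strictAnti_tendsto T
  simp_rw [lt_lifetime_iff_exists_ne hX_absorb hu hTu, ofPred_exists]
  exact .iUnion fun n => (measurableSet_singleton Δ).compl.preimage (measurable_F0inf X (u n))

end Lifetime

section NullSets

variable {S : Type*} [MeasurableSpace S] {Ω : Type*} {Δ : S}
  {X : ℝ≥0 → Ω → S} {P : S → @Measure Ω (F0inf X)} {h : S → ℝ≥0∞} {α : ℝ}

theorem measurable_QbarSet_integrand (h_meas : Measurable h) (T : ℝ≥0) {Γ : Set Ω}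
    (hΓ : MeasurableSet[F0inf X] Γ) :
    Measurable[F0inf X] fun ω =>
      ENNReal.ofReal (Real.exp (α * (T : ℝ))) * Γ.indicator 1 ω * (h (X T ω))⁻¹ :=
  (measurable_const.mul (measurable_const.indicator hΓ)).mul
    (h_meas.comp (measurable_F0inf X T)).inv

variable [MeasurableSingletonClass S]

theorem measure_lt_lifetime_cemetery
    (hP_prob : ∀ x : S, IsProbabilityMeasure (P x))
    (hP_start : ∀ x : S, P x {ω | X 0 ω = x} = 1) (T : ℝ≥0) :
    P Δ {ω | (T : ℝ≥0∞) < lifetime Δ X ω} = 0 := by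
  have hstart : MeasurableSet[F0inf X] {ω | X 0 ω = Δ} :=
    measurable_F0inf X 0 (measurableSet_singleton Δ)
  have := hP_prob Δ
  have hΔ : P Δ {ω | X 0 ω = Δ}ᶜ = 0 := (prob_compl_eq_zero_iff hstart).2 (hP_start Δ)
  refine measure_mono_null ?_ hΔ
  intro ω (hω : (T : ℝ≥0∞) < _) (h0 : X 0 ω = Δ)
  exact (lifetime_le_of_eq h0).not_gt (zero_le.trans_lt hω)

theorem setLIntegral_QbarSet_integrand_eq_zero_iff
    (h_meas : Measurable h) (h_pos : ∀ x : S, x ≠ Δ → 0 < h x ∧ h x < ∞)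
    (hX_absorb : ∀ (ω : Ω) (s t : ℝ≥0), s ≤ t → X s ω = Δ → X t ω = Δ)
    (ν : @Measure Ω (F0inf X)) (T : ℝ≥0) {Γ : Set Ω} (hΓ : MeasurableSet[F0inf X] Γ) :
    ∫⁻ ω in {ω | (T : ℝ≥0∞) < lifetime Δ X ω},
        ENNReal.ofReal (Real.exp (α * (T : ℝ))) * Γ.indicator 1 ω * (h (X T ω))⁻¹ ∂ν = 0 ↔
      ν (Γ ∩ {ω | (T : ℝ≥0∞) < lifetime Δ X ω}) = 0 := by
  have hA := measurableSet_lt_lifetime hX_absorb T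
  rw [lintegral_eq_zero_iff (measurable_QbarSet_integrand h_meas T hΓ),
    ← Measure.restrict_apply hΓ, measure_eq_zero_iff_ae_notMem]
  refine eventually_congr <| (ae_restrict_mem hA).mono fun ω hω => ?_
  have hfin : h (X T ω) ≠ ∞ := (h_pos _ (ne_of_lt_lifetime hω)).2.ne
  simp [ENNReal.inv_ne_zero.2 hfin, Real.exp_pos]

theorem QbarSet_eq_zero_iff (h_meas : Measurable h)
    (h_pos : ∀ x : S, x ≠ Δ → 0 < h x ∧ h x < ∞)
    (hX_absorb : ∀ (ω : Ω) (s t : ℝ≥0), s ≤ t → X s ω = Δ → X t ω = Δ)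
    (hP_prob : ∀ x : S, IsProbabilityMeasure (P x)) (hP_start : ∀ x : S, P x {ω | X 0 ω = x} = 1)
    (x : S) (T : ℝ≥0) {Γ : Set Ω} (hΓ : MeasurableSet[F0inf X] Γ) :
    QbarSet Δ α h X P x T Γ = 0 ↔ P x (Γ ∩ {ω | (T : ℝ≥0∞) < lifetime Δ X ω}) = 0 := by
  rw [QbarSet, Qbar, mul_eq_zero,
    setLIntegral_QbarSet_integrand_eq_zero_iff h_meas h_pos hX_absorb _ T hΓ]
  refine ⟨fun hx => hx.elim (fun hx => ?_) id, Or.inr⟩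
  obtain rfl : x = Δ := by_contra fun hne => (h_pos x hne).1.ne' hx
  exact measure_mono_null inter_subset_right (measure_lt_lifetime_cemetery hP_prob hP_start T)

theorem measurable_QbarSet (h_meas : Measurable h)
    (hX_absorb : ∀ (ω : Ω) (s t : ℝ≥0), s ≤ t → X s ω = Δ → X t ω = Δ)
    (hP_meas : ∀ Λ : Set Ω, MeasurableSet[F0inf X] Λ → Measurable fun x => P x Λ)
    (T : ℝ≥0) {Γ : Set Ω} (hΓ : MeasurableSet[F0inf X] Γ) :
    Measurable fun x => QbarSet Δ α h X P x T Γ := by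
  let _ := F0inf X
  have hA := measurableSet_lt_lifetime hX_absorb T
  simp only [QbarSet, Qbar, ← lintegral_indicator hA]
  exact h_meas.mul <| (Measure.measurable_lintegral <|
    (measurable_QbarSet_integrand h_meas T hΓ).indicator hA).comp
      (Measure.measurable_of_measurable_coe P hP_meas)

theorem Qmu_eq_zero_iff (h_meas : Measurable h)
    (h_pos : ∀ x : S, x ≠ Δ → 0 < h x ∧ h x < ∞)
    (hX_absorb : ∀ (ω : Ω) (s t : ℝ≥0), s ≤ t → X s ω = Δ → X t ω = Δ)
    (hP_prob : ∀ x : S, IsProbabilityMeasure (P x))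
    (hP_meas : ∀ Λ : Set Ω, MeasurableSet[F0inf X] Λ → Measurable fun x => P x Λ)
    (hP_start : ∀ x : S, P x {ω | X 0 ω = x} = 1) (μ : Measure S) (T : ℝ≥0) {Γ : Set Ω}
    (hΓ : MeasurableSet[F0inf X] Γ) :
    Qmu Δ α h X P μ T Γ = 0 ↔ ∀ᵐ x ∂μ, P x (Γ ∩ {ω | (T : ℝ≥0∞) < lifetime Δ X ω}) = 0 := by
  rw [Qmu, lintegral_eq_zero_iff (measurable_QbarSet h_meas hX_absorb hP_meas T hΓ)]
  exact eventually_congr <| .of_forall fun x =>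
    QbarSet_eq_zero_iff h_meas h_pos hX_absorb hP_prob hP_start x T hΓ

theorem PmuT_eq_zero_iff
    (hX_absorb : ∀ (ω : Ω) (s t : ℝ≥0), s ≤ t → X s ω = Δ → X t ω = Δ)
    (hP_meas : ∀ Λ : Set Ω, MeasurableSet[F0inf X] Λ → Measurable fun x => P x Λ)
    (μ : Measure S) (t : ℝ≥0) {Γ : Set Ω} (hΓ : MeasurableSet[F0inf X] Γ) :
    PmuT Δ X P μ t Γ = 0 ↔ ∀ᵐ x ∂μ, P x (Γ ∩ {ω | (t : ℝ≥0∞) < lifetime Δ X ω}) = 0 :=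
  lintegral_eq_zero_iff (hP_meas _ (hΓ.inter (measurableSet_lt_lifetime hX_absorb t)))

theorem PmuT_eq_zero_iff_forall_Qmu(h_meas : Measurable h)
    (h_pos : ∀ x : S, x ≠ Δ → 0 < h x ∧ h x < ∞)
    (hX_absorb : ∀ (ω : Ω) (s t : ℝ≥0), s ≤ t → X s ω = Δ → X t ω = Δ)
    (hP_prob : ∀ x : S, IsProbabilityMeasure (P x))
    (hP_meas : ∀ Λ : Set Ω, MeasurableSet[F0inf X] Λ → Measurable fun x => P x Λ)
    (hP_start : ∀ x : S, P x {ω | X 0 ω = x} = 1) (μ : Measure S) (t : ℝ≥0) {Γ : Set Ω}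
    (hΓ : MeasurableSet[F0inf X] Γ) :
    PmuT Δ X P μ t Γ = 0 ↔ ∀ T, t < T → Qmu Δ α h X P μ T Γ = 0 := by
  simp only [PmuT_eq_zero_iff hX_absorb hP_meas μ _ hΓ,
    Qmu_eq_zero_iff h_meas h_pos hX_absorb hP_prob hP_meas hP_start μ _ hΓ]
  refine ⟨fun hnull T hT => hnull.mono fun x hx => measure_mono_null ?_ hx, fun hnull => ?_⟩
  · exact inter_subset_inter_right _ fun ω hω => (ENNReal.coe_lt_coe.2 hT).trans hω
  · obtain ⟨u, -, htu, hu⟩ := exists_seq_strictAnti_tendsto t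
    filter_upwards [ae_all_iff.2 fun n => hnull (u n) (htu n)] with x hx
    rw [← ENNReal.iUnion_setOf_coe_lt hu htu, inter_iUnion]
    exact measure_iUnion_null hx

end NullSets

section Augmentation

variable {S : Type*} [MeasurableSpace S] [MeasurableSingletonClass S] {Ω : Type*} {Δ : S}
  {X : ℝ≥0 → Ω → S} {P : S → @Measure Ω (F0inf X)} {h : S → ℝ≥0∞} {α : ℝ}

theorem Gmu2_subset_Mmu (h_meas : Measurable h) (h_pos : ∀ x : S, x ≠ Δ → 0 < h x ∧ h x < ∞)
    (hX_absorb : ∀ (ω : Ω) (s t : ℝ≥0), s ≤ t → X s ω = Δ → X t ω = Δ)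
    (hP_prob : ∀ x : S, IsProbabilityMeasure (P x))
    (hP_meas : ∀ Λ : Set Ω, MeasurableSet[F0inf X] Λ → Measurable fun x => P x Λ)
    (hP_start : ∀ x : S, P x {ω | X 0 ω = x} = 1) (μ : Measure S) {t s : ℝ≥0} (hts : t < s) :
    Gmu2 Δ α h X P μ t ⊆ Mmu Δ α h X P μ s := by
  rintro Λ ⟨Λ', Γ, hΛ', hΓ, hsub, hnull⟩
  have hQ := (PmuT_eq_zero_iff_forall_Qmu (α := α) h_meas h_pos hX_absorb hP_prob hP_meas
    hP_start μ t (F0plus_le_F0inf X t _ hΓ)).1 hnull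
  exact ⟨Λ', Γ, F0plus_le_F0 X hts _ hΛ', F0plus_mono X hts.le _ hΓ, hsub,
    fun T hT => hQ T (hts.trans hT)⟩

theorem Qmu_limsup_eq_zero (h_meas : Measurable h) (h_pos : ∀ x : S, x ≠ Δ → 0 < h x ∧ h x < ∞)
    (hX_absorb : ∀ (ω : Ω) (s t : ℝ≥0), s ≤ t → X s ω = Δ → X t ω = Δ)
    (hP_prob : ∀ x : S, IsProbabilityMeasure (P x))
    (hP_meas : ∀ Λ : Set Ω, MeasurableSet[F0inf X] Λ → Measurable fun x => P x Λ)
    (hP_start : ∀ x : S, P x {ω | X 0 ω = x} = 1) (μ : Measure S) {u : ℕ → ℝ≥0} {G : ℕ → Set Ω}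
    (hG : ∀ n, MeasurableSet[F0inf X] (G n)) (hQ : ∀ n T, u n < T → Qmu Δ α h X P μ T (G n) = 0)
    {T : ℝ≥0} (hT : ∀ᶠ n in atTop, u n < T) : Qmu Δ α h X P μ T (limsup G atTop) = 0 := by
  have hA := measurableSet_lt_lifetime hX_absorb T
  have hGinf : MeasurableSet[F0inf X] (limsup G atTop) :=
    measurableSet_limsup_of_eventually (.of_forall hG)
  obtain ⟨N, hN⟩ := eventually_atTop.1 hT
  have hnull : ∀ᵐ x ∂μ, ∀ n ∈ Ici N, P x (G n ∩ {ω | (T : ℝ≥0∞) < lifetime Δ X ω}) = 0 :=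
    (ae_ball_iff (to_countable _)).2 fun n hn =>
      (Qmu_eq_zero_iff h_meas h_pos hX_absorb hP_prob hP_meas hP_start μ T (hG n)).1
        (hQ n T (hN n hn))
  rw [Qmu_eq_zero_iff h_meas h_pos hX_absorb hP_prob hP_meas hP_start μ T hGinf]
  filter_upwards [hnull] with x hx
  rw [← Measure.restrict_apply' hA]
  refine measure_limsup_eq_zero_of_eventually (eventually_atTop.2 ⟨N, fun n hn => ?_⟩)
  rw [Measure.restrict_apply' hA]
  exact hx n hn

theorem mem_Gmu2_of_forall_mem_Mmu (h_meas : Measurable h)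
    (h_pos : ∀ x : S, x ≠ Δ → 0 < h x ∧ h x < ∞)
    (hX_absorb : ∀ (ω : Ω) (s t : ℝ≥0), s ≤ t → X s ω = Δ → X t ω = Δ)
    (hP_prob : ∀ x : S, IsProbabilityMeasure (P x))
    (hP_meas : ∀ Λ : Set Ω, MeasurableSet[F0inf X] Λ → Measurable fun x => P x Λ)
    (hP_start : ∀ x : S, P x {ω | X 0 ω = x} = 1) (μ : Measure S) {t : ℝ≥0} {Λ : Set Ω}
    (hΛ : ∀ s, t < s → Λ ∈ Mmu Δ α h X P μ s) : Λ ∈ Gmu2 Δ α h X P μ t := by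
  obtain ⟨u, -, htu, hu⟩ := exists_seq_strictAnti_tendsto t
  choose L G hL hG hsub hQ using fun n => hΛ (u n) (htu n)
  have hu_lt : ∀ T, t < T → ∀ᶠ n in atTop, u n < T := fun T hT => hu.eventually (gt_mem_nhds hT)
  have hLt : MeasurableSet[F0plus X t] (limsup L atTop) :=
    (measurableSet_F0plus_iff X).2 fun v hv => measurableSet_limsup_of_eventually <|
      (hu_lt v hv).mono fun n hn => F0_mono X hn.le _ (hL n)
  have hGt : MeasurableSet[F0plus X t] (limsup G atTop) :=
    (measurableSet_F0plus_iff X).2 fun v hv => measurableSet_limsup_of_eventually <|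
      (hu_lt v hv).mono fun n hn => F0plus_le_F0 X hn _ (hG n)
  refine ⟨limsup L atTop, limsup G atTop, hLt, hGt, symmDiff_limsup_subset_limsup hsub, ?_⟩
  rw [PmuT_eq_zero_iff_forall_Qmu (α := α) h_meas h_pos hX_absorb hP_prob hP_meas hP_start μ t
    (F0plus_le_F0inf X t _ hGt)]
  exact fun T hT => Qmu_limsup_eq_zero h_meas h_pos hX_absorb hP_prob hP_meas hP_start μ
    (fun n => F0plus_le_F0inf X _ _ (hG n)) hQ (hu_lt T hT)

end Augmentation

theorem Mmu_plus_eq_Gmu2_general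
    {S : Type*} [MeasurableSpace S]
    [StandardBorelSpace S] {Ω : Type*} (Δ : S)
    (X : ℝ≥0 → Ω → S) (P : S → @Measure Ω (F0inf X))
    (h : S → ℝ≥0∞) (α : ℝ)
    (h_meas : Measurable h)
    (h_pos : ∀ x : S, x ≠ Δ → 0 < h x ∧ h x < ∞)
    (hX_absorb : ∀ (ω : Ω) (s t : ℝ≥0), s ≤ t → X s ω = Δ → X t ω = Δ)
    (hP_prob : ∀ x : S, IsProbabilityMeasure (P x))
    (hP_meas : ∀ Λ : Set Ω, MeasurableSet[F0inf X] Λ → Measurable fun x => P x Λ)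
    (hP_start : ∀ x : S, P x {ω | X 0 ω = x} = 1)
    :
    ∀ (μ : Measure S), IsProbabilityMeasure μ → ∀ t : ℝ≥0,
      {Λ : Set Ω | ∀ s : ℝ≥0, t < s → Λ ∈ Mmu Δ α h X P μ s}
        = Gmu2 Δ α h X P μ t := by
  intro μ _ t
  ext Λ
  exact ⟨mem_Gmu2_of_forall_mem_Mmu h_meas h_pos hX_absorb hP_prob hP_meas hP_start μ,
    fun hΛ s hts => Gmu2_subset_Mmu h_meas h_pos hX_absorb hP_prob hP_meas hP_start μ hts hΛ⟩

theorem Mmu_plus_eq_Gmu2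
    {S : Type*} [MeasurableSpace S] [TopologicalSpace S] [BorelSpace S]
    [StandardBorelSpace S] {Ω : Type*} (Δ : S)
    (X : ℝ≥0 → Ω → S) (θ : ℝ≥0 → Ω → Ω) (P : S → @Measure Ω (F0inf X))
    (h : S → ℝ≥0∞) (α : ℝ) (hα : 0 < α)
    (h_meas : Measurable h) (h_cem : h Δ = 0)
    (h_pos : ∀ x : S, x ≠ Δ → 0 < h x ∧ h x < ∞)
    (hX_rc : ∀ (ω : Ω) (t : ℝ≥0),
      Filter.Tendsto (fun s => X s ω) (nhdsWithin t (Set.Ioi t)) (nhds (X t ω)))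
    (hX_absorb : ∀ (ω : Ω) (s t : ℝ≥0), s ≤ t → X s ω = Δ → X t ω = Δ)
    (hshift : ∀ (s t : ℝ≥0) (ω : Ω), X t (θ s ω) = X (t + s) ω)
    (hP_prob : ∀ x : S, IsProbabilityMeasure (P x))
    (hP_meas : ∀ Λ : Set Ω, MeasurableSet[F0inf X] Λ → Measurable fun x => P x Λ)
    (hP_start : ∀ x : S, P x {ω | X 0 ω = x} = 1)
    (hMarkov : ∀ (s : ℝ≥0) (x : S) (Y : Ω → ℝ≥0∞), Measurable[F0inf X] Y →
      ∀ Λ : Set Ω, MeasurableSet[F0plus X s] Λ →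
        ∫⁻ ω in Λ, Y (θ s ω) ∂(P x)
          = ∫⁻ ω in Λ, (∫⁻ ω', Y ω' ∂(P (X s ω))) ∂(P x))
    :
    ∀ (μ : Measure S), IsProbabilityMeasure μ → ∀ t : ℝ≥0,
      {Λ : Set Ω | ∀ s : ℝ≥0, t < s → Λ ∈ Mmu Δ α h X P μ s}
        = Gmu2 Δ α h X P μ t :=
  Mmu_plus_eq_Gmu2_general Δ X P h α h_meas h_pos hX_absorb hP_prob hP_meas hP_start
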